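/- In NC_A(n,d), the two-sided ideal m generated by T_1,...,T_n is nilpotent: m^{1+l} = 0, where l = n(n-1)/2 + d + n - 2 is the length of the unique longest word T_{w'_∘} T_n^{d-1} T_{n-1} ⋯ T_1 (with w'_∘ the longest element of S_n). -/

import Mathlib

/-- Relations of the generalized nil-Coxeter algebra `NC_A(n,d)` on generators
`T_1, …, T_n` (0-indexed by `Fin n`): type-`A_n` braid relations,
`T_i^2 = 0` for `i < n`, and `T_n^d = 0`. -/
inductive NCRel (k : Type) [CommRing k] (n d : ℕ) :
    FreeAlgebra k (Fin n) → FreeAlgebra k (Fin n) → Prop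
  | braid (i j : Fin n) (h : (i : ℕ) + 1 = j) :
      NCRel k n d (FreeAlgebra.ι k i * FreeAlgebra.ι k j * FreeAlgebra.ι k i)
        (FreeAlgebra.ι k j * FreeAlgebra.ι k i * FreeAlgebra.ι k j)
  | comm (i j : Fin n) (h : (i : ℕ) + 1 < j) :
      NCRel k n d (FreeAlgebra.ι k i * FreeAlgebra.ι k j)
        (FreeAlgebra.ι k j * FreeAlgebra.ι k i)
  | sq (i : Fin n) (h : (i : ℕ) + 1 < n) : NCRel k n d (FreeAlgebra.ι k i ^ 2) 0
  | last (i : Fin n) (h : (i : ℕ) + 1 = n) : NCRel k n d (FreeAlgebra.ι k i ^ d) 0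

/-- The generalized nil-Coxeter algebra `NC_A(n,d)`. -/
abbrev NCA (k : Type) [CommRing k] (n d : ℕ) := RingQuot (NCRel k n d)

/-- The generator `T_j` (1-indexed, for `1 ≤ j ≤ n`) of `NC_A(n,d)`. -/
noncomputable def Tg (k : Type) [CommRing k] (n d : ℕ) (j : ℕ) : NCA k n d :=
  if h : 1 ≤ j ∧ j ≤ n then
    RingQuot.mkAlgHom k (NCRel k n d) (FreeAlgebra.ι k ⟨j - 1, by omega⟩) else 1

/-- The descending product `T_{n-1} T_{n-2} ⋯ T_m` in `NC_A(n,d)`. -/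
noncomputable def descT (k : Type) [CommRing k] (n d : ℕ) (m : ℕ) : NCA k n d :=
  ((List.range' m (n - m)).reverse.map (Tg k n d)).prod

/-- The product of generators `T_{j}` along a (1-indexed) word `l`. -/
noncomputable def TwOf (k : Type) [CommRing k] (n d : ℕ) (l : List ℕ) : NCA k n d :=
  (l.map (Tg k n d)).prod

/-- The simple transposition `s_j = (j, j+1)` (1-indexed) in the symmetric group
on `{1, …, n}`, realized as `Equiv.Perm (Fin n)`. -/
def sp (n : ℕ) (j : ℕ) : Equiv.Perm (Fin n) :=
  if h : 1 ≤ j ∧ j < n then Equiv.swap ⟨j - 1, by omega⟩ ⟨j, h.2⟩ else 1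

/-- `l` is a reduced word for `w ∈ S_n` in the simple transpositions `s_1, …, s_{n-1}`. -/
def IsRedWord (n : ℕ) (w : Equiv.Perm (Fin n)) (l : List ℕ) : Prop :=
  (∀ j ∈ l, 1 ≤ j ∧ j < n) ∧ (l.map (sp n)).prod = w ∧
    ∀ l' : List ℕ, (∀ j ∈ l', 1 ≤ j ∧ j < n) → (l'.map (sp n)).prod = w →
      l.length ≤ l'.length

/-!
Every word in the generators either vanishes in `NC_A(n,d)` or equals a normal word of the same
length: `T_u` with `u = D_1 ⋯ D_{n-1}` a standard reduced word of `S_n` (each `D_i` a descending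
run `T_i T_{i-1} ⋯ T_{a_i}`), or `T_u T_n^c T_{n-1} ⋯ T_m` with `0 < c < d`. This holds because
normal words are closed, up to zero, under right multiplication by a generator: `T_j` commutes
past a run, extends it, is killed by `T_j^2 = 0`, or slides through it as `T_{j-1}` by the braid
relation; on the `T_n`-part, `T_n^d = 0` and, for `c ≥ 2`, `T_n^c T_{n-1} ⋯ T_m T_n = 0`.
Normal words have length at most `n(n-1)/2 + d + n - 2`, so longer words vanish, and a product of
`L` elements of `m` is a linear combination of words of length at least `L`.
-/

namespace NCA

variable {k : Type} [CommRing k] {n d : ℕ}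

theorem Tg_eq_mk {j : ℕ} (h1 : 1 ≤ j) (h2 : j ≤ n) :
    Tg k n d j = RingQuot.mkAlgHom k (NCRel k n d) (FreeAlgebra.ι k ⟨j - 1, by omega⟩) :=
  dif_pos ⟨h1, h2⟩

theorem Tg_mul_self {j : ℕ} (h1 : 1 ≤ j) (h2 : j < n) : Tg k n d j * Tg k n d j = 0 := by
  rw [Tg_eq_mk h1 h2.le, ← map_mul, ← sq,
    RingQuot.mkAlgHom_rel k (NCRel.sq ⟨j - 1, by omega⟩ (by simp only; omega)), map_zero]

theorem Tg_pow_last (hn : 1 ≤ n) : Tg k n d n ^ d = 0 := by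
  rw [Tg_eq_mk hn le_rfl, ← map_pow,
    RingQuot.mkAlgHom_rel k (NCRel.last ⟨n - 1, by omega⟩ (by simp only; omega)), map_zero]

theorem Tg_braid {i : ℕ} (h1 : 1 ≤ i) (h2 : i + 1 ≤ n) :
    Tg k n d i * Tg k n d (i + 1) * Tg k n d i =
      Tg k n d (i + 1) * Tg k n d i * Tg k n d (i + 1) := by
  simp only [Tg_eq_mk h1 (by omega : i ≤ n), Tg_eq_mk (by omega : 1 ≤ i + 1) h2, ← map_mul]
  exact RingQuot.mkAlgHom_rel k (NCRel.braid _ _ (by simp only; omega))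

theorem Tg_eq_one {j : ℕ} (h : ¬(1 ≤ j ∧ j ≤ n)) : Tg k n d j = 1 :=
  dif_neg h

theorem Tg_commute {i j : ℕ} (h : i + 1 < j) : Commute (Tg k n d i) (Tg k n d j) := by
  by_cases hi : 1 ≤ i ∧ i ≤ n
  · by_cases hj : j ≤ n
    · rw [Tg_eq_mk hi.1 hi.2, Tg_eq_mk (by omega : 1 ≤ j) hj, Commute, SemiconjBy, ← map_mul,
        ← map_mul]
      exact RingQuot.mkAlgHom_rel k (NCRel.comm _ _ (by simp only; omega))
    · rw [Tg_eq_one (k := k) (n := n) (d := d) (j := j) (by omega)]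
      exact Commute.one_right _
  · rw [Tg_eq_one (k := k) (d := d) hi]
    exact Commute.one_left _

theorem TwOf_append (u v : List ℕ) : TwOf k n d (u ++ v) = TwOf k n d u * TwOf k n d v := by
  simp [TwOf]

theorem TwOf_cons (j : ℕ) (w : List ℕ) : TwOf k n d (j :: w) = Tg k n d j * TwOf k n d w := by
  simp [TwOf]

theorem TwOf_singleton (j : ℕ) : TwOf k n d [j] = Tg k n d j := by simp [TwOf]

theorem TwOf_replicate (c j : ℕ) : TwOf k n d (List.replicate c j) = Tg k n d j ^ c := by
  simp [TwOf]

theorem commute_TwOf {w : List ℕ} {x : NCA k n d} (h : ∀ p ∈ w, Commute (Tg k n d p) x) :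
    Commute (TwOf k n d w) x :=
  Commute.list_prod_left _ _ (by simpa using h)

def descRun (N m : ℕ) : List ℕ := (List.range' m (N + 1 - m)).reverse

theorem mem_descRun {N m p : ℕ} : p ∈ descRun N m ↔ m ≤ p ∧ p ≤ N := by
  simp only [descRun, List.mem_reverse, List.mem_range'_1]
  omega

theorem length_descRun (N m : ℕ) : (descRun N m).length = N + 1 - m := by
  simp [descRun]

theorem descRun_of_lt {N m : ℕ} (h : N < m) : descRun N m = [] := by
  simp [descRun, Nat.sub_eq_zero_of_le h]

theorem descRun_succ_left {N m : ℕ} (h : m ≤ N + 1) :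
    descRun (N + 1) m = (N + 1) :: descRun N m := by
  rw [descRun, descRun, show N + 1 + 1 - m = N + 1 - m + 1 by omega, List.range'_1_concat,
    List.reverse_append, show m + (N + 1 - m) = N + 1 by omega]
  rfl

theorem descRun_append_singleton {N m : ℕ} (h : m ≤ N) :
    descRun N (m + 1) ++ [m] = descRun N m := by
  rw [descRun, descRun, show N + 1 - m = N + 1 - (m + 1) + 1 by omega, List.range'_succ,
    List.reverse_cons]

theorem descRun_append {N a m : ℕ} (h1 : m ≤ a + 1) (h2 : a ≤ N) :
    descRun N (a + 1) ++ descRun a m = descRun N m := by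
  have h : List.range' m (N + 1 - m) =
      List.range' m (a + 1 - m) ++ List.range' (a + 1) (N - a) := by
    rw [show N + 1 - m = (a + 1 - m) + (N - a) by omega, ← List.range'_append_1,
      show m + (a + 1 - m) = a + 1 by omega]
  rw [descRun, descRun, descRun, ← List.reverse_append, h, show N + 1 - (a + 1) = N - a by omega]

theorem commute_TwOf_descRun {N m j : ℕ} (h : j + 1 < m) :
    Commute (TwOf k n d (descRun N m)) (Tg k n d j) :=
  commute_TwOf fun _ hp => (Tg_commute (by rw [mem_descRun] at hp; omega)).symm

theorem TwOf_descRun_mul_Tg_pred {N m : ℕ} (h : m ≤ N) :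
    TwOf k n d (descRun N (m + 1)) * Tg k n d m = TwOf k n d (descRun N m) := by
  rw [← descRun_append_singleton h, TwOf_append, TwOf_singleton]

theorem TwOf_descRun_mul_Tg_self {N m : ℕ} (h1 : 1 ≤ m) (h2 : m ≤ N) (hN : N < n) :
    TwOf k n d (descRun N m) * Tg k n d m = 0 := by
  rw [← descRun_append_singleton h2, TwOf_append, TwOf_singleton, mul_assoc,
    Tg_mul_self h1 (by omega), mul_zero]

theorem Tg_mul_TwOf_descRun {N m : ℕ} (h1 : 1 ≤ N) (h2 : m ≤ N) (hN : N < n) :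
    Tg k n d N * TwOf k n d (descRun N m) = 0 := by
  obtain ⟨M, rfl⟩ : ∃ M, N = M + 1 := ⟨N - 1, by omega⟩
  rw [descRun_succ_left (by omega), TwOf_cons, ← mul_assoc, Tg_mul_self h1 hN, zero_mul]

/-- Sliding `T_{i+1}` through the run `T_N ⋯ T_m` turns it into `T_i`: it commutes past
`T_N ⋯ T_{i+2}` and `T_{i-1} ⋯ T_m`, and `T_{i+1} T_i T_{i+1} = T_i T_{i+1} T_i`. -/
theorem TwOf_descRun_mul_Tg_succ {N m i : ℕ} (hm : 1 ≤ m) (hi : m ≤ i) (hN : i + 1 ≤ N)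
    (hn : N ≤ n) :
    TwOf k n d (descRun N m) * Tg k n d (i + 1) = Tg k n d i * TwOf k n d (descRun N m) := by
  obtain ⟨M, rfl⟩ : ∃ M, i = M + 1 := ⟨i - 1, by omega⟩
  have hsplit : descRun N m = descRun N (M + 3) ++ (M + 2) :: (M + 1) :: descRun M m := by
    rw [← descRun_succ_left (by omega), ← descRun_succ_left (by omega),
      descRun_append (by omega) hN]
  have hA : Commute (TwOf k n d (descRun N (M + 3))) (Tg k n d (M + 1)) :=
    commute_TwOf_descRun (by omega)
  have hB : Commute (TwOf k n d (descRun M m)) (Tg k n d (M + 2)) :=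
    commute_TwOf fun _ hp => Tg_commute (by rw [mem_descRun] at hp; omega)
  have hbraid := Tg_braid (k := k) (n := n) (d := d) (i := M + 1) (by omega) (by omega)
  rw [hsplit, TwOf_append, TwOf_cons, TwOf_cons]
  set A := TwOf k n d (descRun N (M + 3))
  set B := TwOf k n d (descRun M m)
  set s := Tg k n d (M + 1)
  set t := Tg k n d (M + 2)
  calc A * (t * (s * B)) * t = A * t * s * (B * t) := by noncomm_ring
    _ = A * (t * s * t) * B := by rw [hB.eq]; noncomm_ring
    _ = A * (s * t * s) * B := by rw [hbraid]
    _ = (A * s) * (t * (s * B)) := by noncomm_ring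
    _ = s * (A * (t * (s * B))) := by rw [hA.eq]; noncomm_ring

def RepresentedIn (S : Set (List ℕ)) (r : ℕ) (x : NCA k n d) : Prop :=
  x = 0 ∨ ∃ v ∈ S, v.length = r ∧ x = TwOf k n d v

section RepresentedIn

variable {S T : Set (List ℕ)} {r : ℕ} {x : NCA k n d}

theorem RepresentedIn.of_mem {v : List ℕ} (h : v ∈ S) :
    RepresentedIn S v.length (TwOf k n d v) :=
  Or.inr ⟨v, h, rfl, rfl⟩

theorem RepresentedIn.mono (hST : S ⊆ T) (h : RepresentedIn S r x) : RepresentedIn T r x :=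
  h.imp_right fun ⟨v, hv, hlen, hx⟩ => ⟨v, hST hv, hlen, hx⟩

theorem RepresentedIn.mul_TwOf {t : List ℕ} (hST : ∀ v ∈ S, v ++ t ∈ T)
    (h : RepresentedIn S r x) {r' : ℕ} (hr : r + t.length = r') :
    RepresentedIn T r' (x * TwOf k n d t) := by
  rcases h with rfl | ⟨v, hv, rfl, rfl⟩
  · exact Or.inl (zero_mul _)
  · exact Or.inr ⟨v ++ t, hST v hv, by simp [← hr], (TwOf_append v t).symm⟩

end RepresentedIn

variable (k n d) in
def MulClosed (S : Set (List ℕ)) (N : ℕ) : Prop :=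
  ∀ u ∈ S, ∀ j, 1 ≤ j → j ≤ N →
    RepresentedIn S (u.length + 1) (TwOf k n d u * Tg k n d j)

theorem MulClosed.mono {S : Set (List ℕ)} {M N : ℕ} (h : MulClosed k n d S N) (hMN : M ≤ N) :
    MulClosed k n d S M :=
  fun u hu j hj1 hjM => h u hu j hj1 (hjM.trans hMN)

def appendRuns (S : Set (List ℕ)) (N : ℕ) : Set (List ℕ) :=
  {w | ∃ u ∈ S, ∃ a, 1 ≤ a ∧ a ≤ N + 1 ∧ w = u ++ descRun N a}

theorem mulClosed_appendRuns {S : Set (List ℕ)} {N : ℕ} (hS : MulClosed k n d S (N - 1))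
    (hN : N < n) : MulClosed k n d (appendRuns S N) N := by
  rintro _ ⟨u, hu, a, ha1, haN, rfl⟩ j hj1 hjN
  have hmem {b : ℕ} (hb1 : 1 ≤ b) (hbN : b ≤ N + 1) :
      ∀ v ∈ S, v ++ descRun N b ∈ appendRuns S N :=
    fun v hv => ⟨v, hv, b, hb1, hbN, rfl⟩
  have hlen : (u ++ descRun N a).length + 1 = u.length + 1 + (descRun N a).length := by
    simp only [List.length_append]; omega
  rw [TwOf_append, hlen, mul_assoc]
  rcases lt_or_ge (j + 1) a with hlow | hja
  · rw [(commute_TwOf_descRun hlow).eq, ← mul_assoc]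
    exact (hS u hu j hj1 (by omega)).mul_TwOf (hmem ha1 haN) rfl
  rcases eq_or_lt_of_le hja with hext | hja
  · subst hext
    rw [TwOf_descRun_mul_Tg_pred (by omega), ← TwOf_append]
    exact Or.inr ⟨_, hmem hj1 (by omega) u hu, by simp [length_descRun]; omega, rfl⟩
  rcases eq_or_lt_of_le (Nat.le_of_lt_succ hja) with rfl | hslide
  · exact Or.inl (by rw [TwOf_descRun_mul_Tg_self ha1 hjN hN, mul_zero])
  obtain ⟨i, rfl⟩ : ∃ i, j = i + 1 := ⟨j - 1, by omega⟩
  rw [TwOf_descRun_mul_Tg_succ ha1 (by omega) hjN hN.le, ← mul_assoc]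
  exact (hS u hu i (by omega) (by omega)).mul_TwOf (hmem ha1 haN) rfl

theorem mulClosed_image_append_replicate {S : Set (List ℕ)} {N p : ℕ} (hS : MulClosed k n d S N)
    (hp : N + 1 < p) (c : ℕ) : MulClosed k n d ((· ++ List.replicate c p) '' S) N := by
  rintro _ ⟨u, hu, rfl⟩ j hj1 hjN
  have hcomm : Commute (Tg k n d j) (Tg k n d p ^ c) := (Tg_commute (by omega)).pow_right c
  rw [TwOf_append, TwOf_replicate, mul_assoc, ← hcomm.eq, ← mul_assoc, ← TwOf_replicate]
  exact (hS u hu j hj1 hjN).mul_TwOf (fun v hv => Set.mem_image_of_mem _ hv)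
    (by simp only [List.length_append, List.length_replicate]; omega)

/-- The words `D_1 ⋯ D_N` with `D_i = [i, i - 1, …, a_i]` a possibly empty descending run:
the standard reduced words of `S_{N+1}`. -/
def runWords : ℕ → Set (List ℕ)
  | 0 => {[]}
  | N + 1 => appendRuns (runWords N) (N + 1)

/-- The words `u ++ [n, …, n] ++ [n - 1, …, m]` with `u ∈ runWords (n - 1)`, `c` copies of `n`
for some `0 < c < d`, and `1 ≤ m ≤ n`. -/
def topWords (n d : ℕ) : Set (List ℕ) :=
  {w | ∃ c, 1 ≤ c ∧ c < d ∧
    w ∈ appendRuns ((· ++ List.replicate c n) '' runWords (n - 1)) (n - 1)}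

def normalWords (n d : ℕ) : Set (List ℕ) := runWords (n - 1) ∪ topWords n d

theorem nil_mem_runWords (N : ℕ) : [] ∈ runWords N := by
  induction N with
  | zero => rfl
  | succ N ih => exact ⟨[], ih, N + 2, by omega, le_rfl, by rw [descRun_of_lt (by omega)]; rfl⟩

theorem length_le_of_mem_runWords {N : ℕ} {w : List ℕ} (hw : w ∈ runWords N) :
    w.length ≤ N * (N + 1) / 2 := by
  induction N generalizing w with
  | zero => rw [show w = [] from hw]; simp
  | succ N ih =>
    obtain ⟨u, hu, a, ha, -, rfl⟩ := hw
    have hu := ih hu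
    have : (N + 1) * (N + 1 + 1) / 2 = N * (N + 1) / 2 + (N + 1) := by
      rw [show (N + 1) * (N + 1 + 1) = N * (N + 1) + (N + 1) * 2 by ring]
      omega
    simp only [List.length_append, length_descRun, this]
    omega

theorem length_le_of_mem_normalWords (hn : 1 ≤ n) (hd : 1 ≤ d) {w : List ℕ}
    (hw : w ∈ normalWords n d) : w.length ≤ n * (n - 1) / 2 + d + n - 2 := by
  have hbody {u : List ℕ} (hu : u ∈ runWords (n - 1)) : u.length ≤ n * (n - 1) / 2 := by
    have := length_le_of_mem_runWords hu
    rwa [Nat.sub_add_cancel hn, mul_comm] at this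
  rcases hw with hw | ⟨c, -, hcd, _, ⟨u, hu, rfl⟩, m, hm, -, rfl⟩
  · have := hbody hw
    omega
  · have := hbody hu
    simp only [List.length_append, List.length_replicate, length_descRun]
    omega

theorem mulClosed_runWords {N : ℕ} (hN : N < n) : MulClosed k n d (runWords N) N := by
  induction N with
  | zero => intro _ _ j hj1 hj0; omega
  | succ N ih => exact mulClosed_appendRuns (by simpa using ih (by omega)) hN

theorem mulClosed_topWords (hn : 1 ≤ n) : MulClosed k n d (topWords n d) (n - 1) := by
  rintro w ⟨c, hc1, hcd, hw⟩ j hj1 hjn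
  have hbody : MulClosed k n d (runWords (n - 1)) (n - 1 - 1) :=
    (mulClosed_runWords (by omega)).mono (by omega)
  have hS := mulClosed_image_append_replicate hbody (p := n) (by omega) c
  exact (mulClosed_appendRuns hS (by omega) w hw j hj1 hjn).mono fun v hv => ⟨c, hc1, hcd, hv⟩

theorem Tg_pow_mul_TwOf_descRun_mul_Tg {c m : ℕ} (hc : 2 ≤ c) (hm : 1 ≤ m) (hmn : m < n) :
    Tg k n d n ^ c * TwOf k n d (descRun (n - 1) m) * Tg k n d n = 0 := by
  have hbraid := Tg_braid (k := k) (n := n) (d := d) (i := n - 1) (by omega) (by omega)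
  have hslide := TwOf_descRun_mul_Tg_succ (k := k) (d := d) (N := n) (i := n - 1) hm (by omega)
    (by omega) le_rfl
  have hrun := descRun_succ_left (N := n - 1) (m := m) (by omega)
  rw [Nat.sub_add_cancel (by omega : 1 ≤ n)] at hbraid hslide hrun
  rw [hrun, TwOf_cons] at hslide
  obtain ⟨c, rfl⟩ : ∃ c', c = c' + 2 := ⟨c - 2, by omega⟩
  set s := Tg k n d (n - 1)
  set t := Tg k n d n
  set R := TwOf k n d (descRun (n - 1) m)
  calc t ^ (c + 2) * R * t = t ^ (c + 1) * (t * R * t) := by rw [pow_succ]; noncomm_ring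
    _ = t ^ c * (t * s * t) * R := by rw [hslide, pow_succ]; noncomm_ring
    _ = t ^ c * s * t * (s * R) := by rw [← hbraid]; noncomm_ring
    _ = 0 := by rw [Tg_mul_TwOf_descRun (by omega) (by omega) (by omega), mul_zero]

theorem represented_TwOf_append_replicate_mul_Tg_last (hn : 1 ≤ n) {u : List ℕ}
    (hu : u ∈ runWords (n - 1)) {c : ℕ} (hc : c < d) :
    RepresentedIn (normalWords n d) ((u ++ List.replicate c n).length + 1)
      (TwOf k n d (u ++ List.replicate c n) * Tg k n d n) := by
  have hrun : descRun (n - 1) n = [] := descRun_of_lt (by omega)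
  rw [TwOf_append, TwOf_replicate, mul_assoc, ← pow_succ]
  rcases eq_or_lt_of_le (show c + 1 ≤ d from hc) with hcd | hcd
  · exact Or.inl (by rw [hcd, Tg_pow_last hn, mul_zero])
  · refine Or.inr ⟨u ++ List.replicate (c + 1) n ++ descRun (n - 1) n,
      Or.inr ⟨c + 1, by omega, hcd, _, ⟨u, hu, rfl⟩, n, hn, by omega, rfl⟩, ?_, ?_⟩
    · simp [hrun, add_assoc]
    · rw [hrun, List.append_nil, TwOf_append, TwOf_replicate]

theorem represented_TwOf_topWords_mul_Tg_last (hn : 1 ≤ n) {w : List ℕ}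
    (hw : w ∈ topWords n d) :
    RepresentedIn (normalWords n d) (w.length + 1) (TwOf k n d w * Tg k n d n) := by
  obtain ⟨c, hc1, hcd, _, ⟨u, hu, rfl⟩, m, hm1, hmn, rfl⟩ := hw
  rcases eq_or_lt_of_le hmn with rfl | hmn
  · rw [descRun_of_lt (lt_add_one _), List.append_nil]
    exact represented_TwOf_append_replicate_mul_Tg_last hn hu hcd
  have hrun := descRun_succ_left (N := n - 1) (m := m) (by omega)
  rw [Nat.sub_add_cancel hn] at hrun
  rw [TwOf_append, TwOf_append, TwOf_replicate]
  rcases eq_or_lt_of_le hc1 with rfl | hc2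
  · have hslide := TwOf_descRun_mul_Tg_succ (k := k) (d := d) (N := n) (i := n - 1) hm1
      (by omega) (by omega) le_rfl
    rw [Nat.sub_add_cancel hn, hrun, TwOf_cons] at hslide
    rw [pow_one, mul_assoc (TwOf k n d u * _), mul_assoc (TwOf k n d u),
      ← mul_assoc (Tg k n d n), hslide, ← mul_assoc, ← TwOf_cons, ← hrun]
    refine ((mulClosed_runWords (by omega)) u hu (n - 1) (by omega) le_rfl).mul_TwOf
      (fun v hv => Or.inr ⟨1, le_rfl, hcd, _, ⟨v, hv, rfl⟩, m, hm1, by omega, ?_⟩) ?_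
    · simp only [hrun, List.length_append, List.length_replicate, List.length_cons]
      omega
    · simp [hrun]
  · refine Or.inl ?_
    rw [mul_assoc (TwOf k n d u * _), mul_assoc (TwOf k n d u), ← mul_assoc (Tg k n d n ^ c),
      Tg_pow_mul_TwOf_descRun_mul_Tg hc2 hm1 (by omega), mul_zero]

theorem mulClosed_normalWords (hn : 1 ≤ n) (hd : 1 ≤ d) :
    MulClosed k n d (normalWords n d) n := by
  rintro w hw j hj1 hjn
  rcases eq_or_lt_of_le hjn with rfl | hjn
  · rcases hw with hw | hw
    · simpa using represented_TwOf_append_replicate_mul_Tg_last (k := k) hn hw hd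
    · exact represented_TwOf_topWords_mul_Tg_last hn hw
  · rcases hw with hw | hw
    · exact (mulClosed_runWords (by omega) w hw j hj1 (by omega)).mono Set.subset_union_left
    · exact (mulClosed_topWords hn w hw j hj1 (by omega)).mono Set.subset_union_right

theorem represented_TwOf (hn : 1 ≤ n) (hd : 1 ≤ d) {w : List ℕ}
    (hw : ∀ j ∈ w, 1 ≤ j ∧ j ≤ n) :
    RepresentedIn (normalWords n d) w.length (TwOf k n d w) := by
  induction w using List.reverseRecOn with
  | nil => exact .of_mem (Or.inl (nil_mem_runWords _))
  | append_singleton w j ih =>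
    have hj := hw j (by simp)
    rcases ih fun p hp => hw p (by simp [hp]) with h0 | ⟨v, hv, hlen, hx⟩
    · exact Or.inl (by rw [TwOf_append, h0, zero_mul])
    · rw [TwOf_append, TwOf_singleton, hx, List.length_append, List.length_singleton, ← hlen]
      exact mulClosed_normalWords hn hd v hv j hj.1 hj.2

theorem TwOf_eq_zero_of_length_lt (hn : 1 ≤ n) (hd : 1 ≤ d) {w : List ℕ}
    (hw : ∀ j ∈ w, 1 ≤ j ∧ j ≤ n) (hlen : n * (n - 1) / 2 + d + n - 2 < w.length) :
    TwOf k n d w = 0 := by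
  rcases represented_TwOf (k := k) hn hd hw with h0 | ⟨v, hv, hvlen, -⟩
  · exact h0
  · have := length_le_of_mem_normalWords hn hd hv
    omega

variable (k n d) in
def wordSpan (r : ℕ) : Submodule k (NCA k n d) :=
  Submodule.span k
    {x | ∃ w : List ℕ, (∀ j ∈ w, 1 ≤ j ∧ j ≤ n) ∧ r ≤ w.length ∧
      x = TwOf k n d w}

theorem TwOf_mem_wordSpan {r : ℕ} {w : List ℕ} (hw : ∀ j ∈ w, 1 ≤ j ∧ j ≤ n)
    (hr : r ≤ w.length) : TwOf k n d w ∈ wordSpan k n d r :=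
  Submodule.subset_span ⟨w, hw, hr, rfl⟩

theorem wordSpan_mul_le (r s : ℕ) :
    wordSpan k n d r * wordSpan k n d s ≤ wordSpan k n d (r + s) := by
  rw [wordSpan, wordSpan, Submodule.span_mul_span]
  refine Submodule.span_le.2 ?_
  rintro _ ⟨_, ⟨u, hu, hru, rfl⟩, _, ⟨v, hv, hsv, rfl⟩, rfl⟩
  show TwOf k n d u * TwOf k n d v ∈ wordSpan k n d (r + s)
  rw [← TwOf_append]
  refine TwOf_mem_wordSpan (fun j hj => ?_) (by simp only [List.length_append]; omega)
  rcases List.mem_append.1 hj with hj | hj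
  exacts [hu j hj, hv j hj]

theorem mem_wordSpan_zero (x : NCA k n d) : x ∈ wordSpan k n d 0 := by
  obtain ⟨p, rfl⟩ := RingQuot.mkAlgHom_surjective k (NCRel k n d) x
  induction p using FreeAlgebra.induction with
  | grade0 r =>
    rw [AlgHom.commutes, Algebra.algebraMap_eq_smul_one]
    exact Submodule.smul_mem _ r (TwOf_mem_wordSpan (w := []) (by simp) le_rfl)
  | grade1 i =>
    have hi : RingQuot.mkAlgHom k (NCRel k n d) (FreeAlgebra.ι k i) = TwOf k n d [i + 1] := by
      rw [TwOf_singleton, Tg_eq_mk (by omega) i.isLt]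
      rfl
    rw [hi]
    exact TwOf_mem_wordSpan (by simp) (Nat.zero_le _)
  | mul a b ha hb =>
    rw [map_mul]
    exact wordSpan_mul_le 0 0 (Submodule.mul_mem_mul ha hb)
  | add a b ha hb =>
    rw [map_add]
    exact add_mem ha hb

theorem mem_wordSpan_one_of_mem_span {x : NCA k n d}
    (hx : x ∈ TwoSidedIdeal.span {y : NCA k n d | ∃ j, 1 ≤ j ∧ j ≤ n ∧ y = Tg k n d j}) :
    x ∈ wordSpan k n d 1 := by
  induction hx using TwoSidedIdeal.span_induction with
  | mem x hx =>
    obtain ⟨j, h1, h2, rfl⟩ := hx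
    exact TwOf_singleton (k := k) (d := d) j ▸ TwOf_mem_wordSpan (by simp [h1, h2]) le_rfl
  | zero => exact zero_mem _
  | add x y _ _ hx hy => exact add_mem hx hy
  | neg x _ hx => exact neg_mem hx
  | left_absorb a x _ hx =>
    simpa using wordSpan_mul_le 0 1 (Submodule.mul_mem_mul (mem_wordSpan_zero a) hx)
  | right_absorb b x _ hx =>
    exact wordSpan_mul_le 1 0 (Submodule.mul_mem_mul hx (mem_wordSpan_zero b))

theorem list_prod_mem_wordSpan {L : List (NCA k n d)} (hL : ∀ x ∈ L, x ∈ wordSpan k n d 1) :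
    L.prod ∈ wordSpan k n d L.length := by
  induction L with
  | nil => exact TwOf_mem_wordSpan (w := []) (by simp) le_rfl
  | cons x L ih =>
    rw [List.prod_cons, List.length_cons, add_comm]
    exact wordSpan_mul_le 1 _ (Submodule.mul_mem_mul (hL x (by simp))
      (ih fun y hy => hL y (by simp [hy])))

theorem wordSpan_eq_bot (hn : 1 ≤ n) (hd : 1 ≤ d) {r : ℕ}
    (hr : n * (n - 1) / 2 + d + n - 2 < r) : wordSpan k n d r = ⊥ := by
  rw [wordSpan, Submodule.span_eq_bot]
  rintro _ ⟨w, hw, hrw, rfl⟩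
  exact TwOf_eq_zero_of_length_lt hn hd hw (by omega)

end NCA

/-- In `NC_A(n,d)`, the two-sided ideal `m` generated by `T_1, …, T_n` satisfies
`m^{1+l} = 0` where `l = n(n-1)/2 + d + n - 2` is the length of the unique longest
word: every product of `l + 1` elements of `m` vanishes. -/
theorem NCA_ideal_nilpotent (k : Type) [CommRing k] (n d : ℕ) (hn : 1 ≤ n) (hd : 2 ≤ d)
    (L : List (NCA k n d))
    (hL : ∀ x ∈ L,
      x ∈ TwoSidedIdeal.span {y : NCA k n d | ∃ j, 1 ≤ j ∧ j ≤ n ∧ y = Tg k n d j})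
    (hlen : L.length = (n * (n - 1) / 2 + d + n - 2) + 1) :
    L.prod = 0 := by
  have hprod := NCA.list_prod_mem_wordSpan fun x hx => NCA.mem_wordSpan_one_of_mem_span (hL x hx)
  rwa [NCA.wordSpan_eq_bot hn (by omega) (by omega), Submodule.mem_bot] at hprod
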